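/- Let ε > 0 and let C be an n×n real symmetric positive semidefinite matrix with diagonal part D, off-diagonal part O = C − D, Dᵉ = D + εI, and Bᵉ = (Dᵉ)^{-1/2} O (Dᵉ)^{-1/2}, with eigenvalues λ₁, …, λₙ of Bᵉ and λ_min = minᵢ λᵢ. Let R₂ = Σ_{i=1}^n [ log(1 + λᵢ) − λᵢ + (1/2) λᵢ² ]. Then |R₂| ≤ ‖Bᵉ‖_F² · ‖Bᵉ‖₂ / (3(1 + λ_min)), where ‖·‖_F is the Frobenius norm and ‖·‖₂ is the spectral norm. -/

import Mathlib

/-!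
Since `1 + Bᵉ = (Dᵉ)^{-1/2} (C + εI) (Dᵉ)^{-1/2}` is positive definite, every eigenvalue satisfies
`λᵢ > -1`, and since `Bᵉ` has zero diagonal, `∑ λᵢ = tr Bᵉ = 0`, so `-1 < λ_min ≤ 0`. For
`x ≥ λ_min` the remainder `log (1 + x) - x + x² / 2 = ∫₀ˣ t² / (1 + t) dt` is at most
`|x|³ / (3 (1 + λ_min))` in absolute value, and summing `|λᵢ|³ ≤ λᵢ² ‖Bᵉ‖₂` gives the bound,
because `∑ λᵢ² = tr (Bᵉ)² = ‖Bᵉ‖_F²`.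
-/

open Matrix

/-- The diagonal matrix formed from the diagonal entries of `C`. -/
noncomputable def diagPart {n : ℕ} (C : Matrix (Fin n) (Fin n) ℝ) :
    Matrix (Fin n) (Fin n) ℝ :=
  Matrix.diagonal fun i => C i i

/-- `(Dᵉ)⁻¹ᐟ²`, the inverse square root of `Dᵉ = diag(C) + ε I`
(a diagonal matrix with positive entries). -/
noncomputable def invSqrtRegDiag {n : ℕ} (C : Matrix (Fin n) (Fin n) ℝ) (ε : ℝ) :
    Matrix (Fin n) (Fin n) ℝ :=
  Matrix.diagonal fun i => (Real.sqrt (C i i + ε))⁻¹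

/-- `Bᵉ = (Dᵉ)⁻¹ᐟ² O (Dᵉ)⁻¹ᐟ²`, the normalized off-diagonal matrix,
where `O = C - diag(C)`. -/
noncomputable def normOffDiag {n : ℕ} (C : Matrix (Fin n) (Fin n) ℝ) (ε : ℝ) :
    Matrix (Fin n) (Fin n) ℝ :=
  invSqrtRegDiag C ε * (C - diagPart C) * invSqrtRegDiag C ε

open Real Finset intervalIntegral
open scoped ComplexOrder Interval

theorem hasDerivAt_log_one_add_sub_add {t : ℝ} (ht : -1 < t) :
    HasDerivAt (fun t => log (1 + t) - t + 1 / 2 * t ^ 2) (t ^ 2 / (1 + t)) t := by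
  have hlog : HasDerivAt (fun t => log (1 + t)) (1 / (1 + t)) t := by
    simpa using ((hasDerivAt_id' t).const_add 1).log (by linarith)
  have ht' : 1 + t ≠ 0 := by linarith
  refine ((hlog.sub (hasDerivAt_id' t)).add
    ((hasDerivAt_pow 2 t).const_mul (1 / 2))).congr_deriv ?_
  field_simp
  ring

theorem log_one_add_sub_add_eq_integral {x : ℝ} (hx : -1 < x) :
    log (1 + x) - x + 1 / 2 * x ^ 2 = ∫ t in (0 : ℝ)..x, t ^ 2 / (1 + t) := by
  have hmem : ∀ t ∈ Set.uIcc 0 x, -1 < t := fun t ht =>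
    (lt_min (by norm_num) hx).trans_le ht.1
  rw [integral_eq_sub_of_hasDerivAt (fun t ht => hasDerivAt_log_one_add_sub_add (hmem t ht))]
  · simp
  · refine ContinuousOn.intervalIntegrable <|
      (continuousOn_pow 2).div (by fun_prop) fun t ht => ?_
    linarith [hmem t ht]

theorem abs_log_one_add_sub_add_le {m x : ℝ} (hm : -1 < m) (hm0 : m ≤ 0) (hmx : m ≤ x) :
    |log (1 + x) - x + 1 / 2 * x ^ 2| ≤ |x| ^ 3 / (3 * (1 + m)) := by
  have hbound : ∀ t ∈ Ι 0 x, ‖t ^ 2 / (1 + t)‖ ≤ t ^ 2 / (1 + m) := fun t ht => by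
    have hmt : m ≤ t := (le_min hm0 hmx).trans (Set.uIoc_subset_uIcc ht).1
    rw [Real.norm_eq_abs, abs_of_nonneg (div_nonneg (sq_nonneg t) (by linarith))]
    exact div_le_div_of_nonneg_left (sq_nonneg t) (by linarith) (by linarith)
  calc |log (1 + x) - x + 1 / 2 * x ^ 2|
      = ‖∫ t in (0 : ℝ)..x, t ^ 2 / (1 + t)‖ := by
        rw [log_one_add_sub_add_eq_integral (by linarith), Real.norm_eq_abs]
    _ ≤ |∫ t in (0 : ℝ)..x, t ^ 2 / (1 + m)| :=
        norm_integral_le_abs_of_norm_le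
          (MeasureTheory.ae_restrict_of_forall_mem measurableSet_uIoc hbound)
          (((continuous_pow 2).div_const _).intervalIntegrable _ _)
    _ = |x| ^ 3 / (3 * (1 + m)) := by
        rw [intervalIntegral.integral_div, integral_pow, abs_div,
          abs_of_pos (by linarith : 0 < 1 + m)]
        norm_num [abs_div, abs_pow, div_div]

theorem abs_sum_log_one_add_sub_add_le {ι : Type*} [Fintype ι] (hne : (univ : Finset ι).Nonempty)
    (lam : ι → ℝ) (hsum : ∑ i, lam i = 0) (hlam : ∀ i, -1 < lam i) :
    |∑ i, (log (1 + lam i) - lam i + 1 / 2 * lam i ^ 2)|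
      ≤ (∑ i, lam i ^ 2) * (univ.sup' hne fun i => |lam i|) / (3 * (1 + univ.inf' hne lam)) := by
  set m := univ.inf' hne lam
  set M := univ.sup' hne fun i => |lam i|
  have hm_le : ∀ i, m ≤ lam i := fun i => inf'_le _ (mem_univ i)
  have hm : -1 < m := (lt_inf'_iff hne).mpr fun i _ => hlam i
  have hm0 : m ≤ 0 := by
    obtain ⟨i, -, hi⟩ := exists_le_of_sum_le hne (f := lam) (g := 0) (by simp [hsum])
    exact (hm_le i).trans hi
  have hcube : ∀ i, |lam i| ^ 3 ≤ lam i ^ 2 * M := fun i => by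
    rw [pow_succ, sq_abs]
    exact mul_le_mul_of_nonneg_left (le_sup' (fun j => |lam j|) (mem_univ i)) (sq_nonneg _)
  calc |∑ i, (log (1 + lam i) - lam i + 1 / 2 * lam i ^ 2)|
      ≤ ∑ i, |lam i| ^ 3 / (3 * (1 + m)) :=
        (abs_sum_le_sum_abs _ _).trans <| sum_le_sum fun i _ =>
          abs_log_one_add_sub_add_le hm hm0 (hm_le i)
    _ = (∑ i, |lam i| ^ 3) / (3 * (1 + m)) := (sum_div _ _ _).symm
    _ ≤ (∑ i, lam i ^ 2) * M / (3 * (1 + m)) := by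
        rw [sum_mul]
        gcongr with i
        · linarith
        · exact hcube i

namespace Matrix.IsHermitian

variable {ι 𝕜 : Type*} [Fintype ι] [DecidableEq ι] [RCLike 𝕜] {A : Matrix ι ι 𝕜}

theorem trace_mul_self (hA : A.IsHermitian) :
    (A * A).trace = ∑ i, (hA.eigenvalues i : 𝕜) ^ 2 := by
  conv_lhs => rw [hA.spectral_theorem, ← map_mul, Unitary.conjStarAlgAut_apply, trace_mul_cycle,
    Unitary.coe_star_mul_self, one_mul, diagonal_mul_diagonal, trace_diagonal]
  simp [sq]

theorem neg_one_lt_eigenvalues (hA : A.IsHermitian) (h : (1 + A).PosDef) (i : ι) :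
    -1 < hA.eigenvalues i := by
  rw [hA.spectral_theorem, ← map_one (Unitary.conjStarAlgAut 𝕜 _ hA.eigenvectorUnitary),
    ← map_add, Unitary.conjStarAlgAut_apply, Unitary.isUnit_coe.posDef_star_right_conjugate_iff,
    ← diagonal_one, diagonal_add, posDef_diagonal_iff] at h
  have hi : (0 : 𝕜) < ((1 + hA.eigenvalues i : ℝ) : 𝕜) := by simpa using h i
  rw [RCLike.ofReal_pos] at hi
  linarith

theorem sum_sq_eigenvalues {B : Matrix ι ι ℝ} (hB : B.IsHermitian) :
    ∑ i, hB.eigenvalues i ^ 2 = ∑ i, ∑ j, B i j ^ 2 := by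
  have htrace := hB.trace_mul_self
  simp only [RCLike.ofReal_real_eq_id, id] at htrace
  rw [← htrace]
  simp only [trace, diag_apply, mul_apply, sq]
  refine sum_congr rfl fun i _ => sum_congr rfl fun j _ => ?_
  rw [← hB.apply j i, star_trivial]

end Matrix.IsHermitian

section normOffDiag

variable {n : ℕ} {C : Matrix (Fin n) (Fin n) ℝ} {ε : ℝ}

theorem trace_normOffDiag : (normOffDiag C ε).trace = 0 := by
  simp [normOffDiag, invSqrtRegDiag, diagPart, trace, mul_diagonal, diagonal_mul]

theorem invSqrtRegDiag_mul_regDiag_mul_invSqrtRegDiag (hd : ∀ i, 0 < C i i + ε) :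
    invSqrtRegDiag C ε * (diagPart C + ε • 1) * invSqrtRegDiag C ε = 1 := by
  rw [invSqrtRegDiag, diagPart, ← diagonal_one, ← diagonal_smul, diagonal_add,
    diagonal_mul_diagonal, diagonal_mul_diagonal]
  congr 1
  funext i
  have hsqrt : √(C i i + ε) ≠ 0 := (Real.sqrt_pos.mpr (hd i)).ne'
  simp only [Pi.smul_apply, smul_eq_mul, mul_one]
  field_simp
  exact (Real.sq_sqrt (hd i).le).symm

theorem one_add_normOffDiag (hd : ∀ i, 0 < C i i + ε) :
    1 + normOffDiag C ε = invSqrtRegDiag C ε * (C + ε • 1) * invSqrtRegDiag C ε := by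
  conv_lhs => rw [← invSqrtRegDiag_mul_regDiag_mul_invSqrtRegDiag hd]
  rw [normOffDiag, ← add_mul, ← mul_add]
  congr 2
  abel

theorem posDef_one_add_normOffDiag (hC : C.PosSemidef) (hε : 0 < ε) :
    (1 + normOffDiag C ε).PosDef := by
  have hd : ∀ i, 0 < C i i + ε := fun i => add_pos_of_nonneg_of_pos hC.diag_nonneg hε
  have hS : IsUnit (invSqrtRegDiag C ε) :=
    isUnit_diagonal.mpr (Pi.isUnit_iff.mpr fun i =>
      (inv_pos.mpr (Real.sqrt_pos.mpr (hd i))).ne'.isUnit)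
  have hSstar : star (invSqrtRegDiag C ε) = invSqrtRegDiag C ε := by
    simp [invSqrtRegDiag, star_eq_conjTranspose]
  rw [one_add_normOffDiag hd]
  nth_rewrite 2 [← hSstar]
  exact hS.posDef_star_right_conjugate_iff.mpr (PosDef.posSemidef_add hC (PosDef.one.smul hε))

end normOffDiag

/-- With λᵢ the eigenvalues of the normalized off-diagonal
matrix Bᵉ, λ_min = minᵢ λᵢ, R₂ = Σᵢ [log(1 + λᵢ) − λᵢ + (1/2) λᵢ²],
squared Frobenius norm ‖Bᵉ‖_F² = Σᵢⱼ (Bᵉ)ᵢⱼ², and spectral norm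
‖Bᵉ‖₂ = maxᵢ |λᵢ|, one has |R₂| ≤ ‖Bᵉ‖_F² ‖Bᵉ‖₂ / (3(1 + λ_min)). -/
theorem remainder_frobenius_spectral_bound
    {n : ℕ} (hne : (Finset.univ : Finset (Fin n)).Nonempty)
    (ε : ℝ) (hε : 0 < ε)
    (C : Matrix (Fin n) (Fin n) ℝ) (hC : C.PosSemidef)
    (hB : (normOffDiag C ε).IsHermitian) :
    |∑ i, (Real.log (1 + hB.eigenvalues i) - hB.eigenvalues i
            + (1 / 2) * (hB.eigenvalues i) ^ 2)|
      ≤ (∑ i, ∑ j, (normOffDiag C ε i j) ^ 2)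
          * (Finset.univ.sup' hne fun i => |hB.eigenvalues i|)
          / (3 * (1 + Finset.univ.inf' hne hB.eigenvalues)) := by
  have hsum : ∑ i, hB.eigenvalues i = 0 := by
    have htrace := hB.trace_eq_sum_eigenvalues
    simp only [RCLike.ofReal_real_eq_id, id, trace_normOffDiag] at htrace
    exact htrace.symm
  rw [← hB.sum_sq_eigenvalues]
  exact abs_sum_log_one_add_sub_add_le hne _ hsum
    (hB.neg_one_lt_eigenvalues (posDef_one_add_normOffDiag hC hε))
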